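/- (Lemma 2, front estimate.) Fix x* > 0 and t₁ > 0, and let u, v : [0,x*] → ℝ be continuous. Then for every t ∈ [t₁, min(τ*_u, τ*_v)], |Υ^u(t) − Υ^v(t)| ≤ C_{u,v}·‖u − v‖, where C_{u,v} = exp((x*)⁴·M_{u,v}⁶/t₁²)·(x*)⁵·M_{u,v}⁶/t₁² and M_{u,v} = exp(max(‖u‖,‖v‖)). -/

import Mathlib

/-!
Write `a = Υ^u(t) ≥ b = Υ^v(t)` and `M = exp (max ‖u‖ ‖v‖)`. Since `F_u` is increasing and
`x ≤ M F_u(x)`, the gap satisfies `(a - b) b ≤ M (W_u(a) - W_u(b)) = M (W_v(b) - W_u(b))`, and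
`|W_v - W_u| ≤ (x*)² M ‖u - v‖` because the integrands `exp (-u)`, `exp (-v)` differ by at most
`M ‖u - v‖`. The front stays away from `0` because `t₁ ≤ W_v(b) ≤ b² M`; together with
`t₁ ≤ (x*)² M` this gives `a - b ≤ (x*)⁵ M⁴ / t₁² · ‖u - v‖`, which suffices as `M ≥ 1`.
-/

open Set

noncomputable def Fu (xs : ℝ) (h : 0 ≤ xs) (u : C(Icc (0:ℝ) xs, ℝ)) (x : ℝ) : ℝ :=
  ∫ z in (0:ℝ)..x, Real.exp (-(u (projIcc 0 xs h z)))

noncomputable def Wu (xs : ℝ) (h : 0 ≤ xs) (u : C(Icc (0:ℝ) xs, ℝ)) (x : ℝ) : ℝ :=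
  ∫ ξ in (0:ℝ)..x, Fu xs h u ξ

noncomputable def tau (xs : ℝ) (h : 0 ≤ xs) (u : C(Icc (0:ℝ) xs, ℝ)) : ℝ :=
  Wu xs h u xs

open Real intervalIntegral

theorem Real.abs_exp_sub_exp_le (a b : ℝ) : |exp a - exp b| ≤ exp (max a b) * |a - b| := by
  wlog hba : b ≤ a generalizing a b
  · simpa only [abs_sub_comm, max_comm] using this b a (le_of_not_ge hba)
  have hb : exp b = exp a * exp (b - a) := by rw [← exp_add]; ring_nf
  rw [abs_of_nonneg (sub_nonneg.2 (exp_le_exp.2 hba)), abs_of_nonneg (sub_nonneg.2 hba),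
    max_eq_left hba, hb]
  nlinarith [mul_le_mul_of_nonneg_left (add_one_le_exp (b - a)) (exp_pos a).le]

namespace intervalIntegral

theorem sub_mul_le_integral_of_le {f : ℝ → ℝ} {a b c : ℝ} (hab : a ≤ b)
    (hf : IntervalIntegrable f MeasureTheory.volume a b) (h : ∀ x ∈ Icc a b, c ≤ f x) :
    (b - a) * c ≤ ∫ x in a..b, f x := by
  simpa only [integral_const, smul_eq_mul] using integral_mono_on hab intervalIntegrable_const hf h

theorem integral_le_sub_mul_of_le {f : ℝ → ℝ} {a b c : ℝ} (hab : a ≤ b)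
    (hf : IntervalIntegrable f MeasureTheory.volume a b) (h : ∀ x ∈ Icc a b, f x ≤ c) :
    ∫ x in a..b, f x ≤ (b - a) * c := by
  simpa only [integral_const, smul_eq_mul] using integral_mono_on hab hf intervalIntegrable_const h

end intervalIntegral

theorem ContinuousMap.abs_apply_le_norm {α : Type*} [TopologicalSpace α] [CompactSpace α]
    (f : C(α, ℝ)) (x : α) : |f x| ≤ ‖f‖ := by
  simpa only [Real.norm_eq_abs] using f.norm_coe_le_norm x

noncomputable def invPermeability (xs : ℝ) (h : 0 ≤ xs) (u : C(Icc (0:ℝ) xs, ℝ)) (z : ℝ) : ℝ :=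
  exp (-(u (projIcc 0 xs h z)))

section Front

variable {xs : ℝ} (h : 0 ≤ xs) {u v : C(Icc (0:ℝ) xs, ℝ)} {M : ℝ}

theorem Fu_eq_integral_invPermeability (x : ℝ) :
    Fu xs h u x = ∫ z in (0:ℝ)..x, invPermeability xs h u z := rfl

theorem intervalIntegrable_invPermeability (a b : ℝ) :
    IntervalIntegrable (invPermeability xs h u) MeasureTheory.volume a b :=
  (continuous_exp.comp (u.continuous.comp continuous_projIcc).neg).intervalIntegrable a b

theorem invPermeability_le (z : ℝ) : invPermeability xs h u z ≤ exp ‖u‖ :=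
  exp_le_exp.2 ((neg_le_abs _).trans (u.abs_apply_le_norm _))

theorem exp_neg_norm_le_invPermeability (z : ℝ) : exp (-‖u‖) ≤ invPermeability xs h u z :=
  exp_le_exp.2 (neg_le_neg ((le_abs_self _).trans (u.abs_apply_le_norm _)))

theorem abs_invPermeability_sub_le (hu : exp ‖u‖ ≤ M) (hv : exp ‖v‖ ≤ M) (z : ℝ) :
    |invPermeability xs h u z - invPermeability xs h v z| ≤ M * ‖u - v‖ := by
  set p := projIcc 0 xs h z
  have hmax : exp (max (-(u p)) (-(v p))) ≤ M := by
    rw [exp_monotone.map_max]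
    exact max_le ((invPermeability_le h z).trans hu) ((invPermeability_le h z).trans hv)
  have hdiff : |-(u p) - -(v p)| ≤ ‖u - v‖ := by
    rw [neg_sub_neg, abs_sub_comm, ← Real.dist_eq, ← dist_eq_norm]
    exact ContinuousMap.dist_apply_le_dist p
  exact (abs_exp_sub_exp_le _ _).trans
    (mul_le_mul hmax hdiff (abs_nonneg _) ((exp_pos _).le.trans hu))

theorem Fu_monotone : Monotone (Fu xs h u) := by
  intro a b hab
  rw [Fu_eq_integral_invPermeability, Fu_eq_integral_invPermeability,
    ← integral_add_adjacent_intervals (intervalIntegrable_invPermeability h 0 a)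
      (intervalIntegrable_invPermeability h a b)]
  exact le_add_of_nonneg_right (integral_nonneg hab fun z _ => (exp_pos _).le)

theorem Fu_le {x : ℝ} (hx : 0 ≤ x) : Fu xs h u x ≤ x * exp ‖u‖ := by
  rw [Fu_eq_integral_invPermeability]
  simpa only [sub_zero] using integral_le_sub_mul_of_le hx
    (intervalIntegrable_invPermeability h 0 x) fun z _ => invPermeability_le h z

theorem le_exp_norm_mul_Fu {x : ℝ} (hx : 0 ≤ x) : x ≤ exp ‖u‖ * Fu xs h u x := by
  have hlow : x * exp (-‖u‖) ≤ Fu xs h u x := by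
    rw [Fu_eq_integral_invPermeability]
    simpa only [sub_zero] using sub_mul_le_integral_of_le hx
      (intervalIntegrable_invPermeability h 0 x) fun z _ => exp_neg_norm_le_invPermeability h z
  calc x = exp ‖u‖ * (x * exp (-‖u‖)) := by rw [exp_neg]; field_simp
    _ ≤ exp ‖u‖ * Fu xs h u x := by gcongr

theorem abs_Fu_sub_Fu_le (hu : exp ‖u‖ ≤ M) (hv : exp ‖v‖ ≤ M) {x : ℝ} (hx : 0 ≤ x) :
    |Fu xs h u x - Fu xs h v x| ≤ M * ‖u - v‖ * x := by
  rw [Fu_eq_integral_invPermeability, Fu_eq_integral_invPermeability,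
    ← integral_sub (intervalIntegrable_invPermeability h 0 x)
      (intervalIntegrable_invPermeability h 0 x)]
  simpa only [Real.norm_eq_abs, sub_zero, abs_of_nonneg hx] using
    norm_integral_le_of_norm_le_const (a := 0) (b := x) fun z _ =>
      (Real.norm_eq_abs _).trans_le (abs_invPermeability_sub_le h hu hv z)

theorem intervalIntegrable_Fu (a b : ℝ) :
    IntervalIntegrable (Fu xs h u) MeasureTheory.volume a b :=
  (Fu_monotone h).intervalIntegrable

theorem Wu_le_mul_Fu {x : ℝ} (hx : 0 ≤ x) : Wu xs h u x ≤ x * Fu xs h u x := by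
  rw [Wu]
  simpa only [sub_zero] using integral_le_sub_mul_of_le hx (intervalIntegrable_Fu h 0 x)
    fun ξ hξ => Fu_monotone h hξ.2

theorem Wu_le_sq_mul {x : ℝ} (hx : 0 ≤ x) : Wu xs h u x ≤ x ^ 2 * exp ‖u‖ :=
  calc Wu xs h u x ≤ x * Fu xs h u x := Wu_le_mul_Fu h hx
    _ ≤ x * (x * exp ‖u‖) := by gcongr; exact Fu_le h hx
    _ = x ^ 2 * exp ‖u‖ := by ring

theorem sub_mul_Fu_le_Wu_sub_Wu {a b : ℝ} (hba : b ≤ a) :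
    (a - b) * Fu xs h u b ≤ Wu xs h u a - Wu xs h u b := by
  rw [Wu, Wu, integral_interval_sub_left (intervalIntegrable_Fu h 0 a)
    (intervalIntegrable_Fu h 0 b)]
  exact sub_mul_le_integral_of_le hba (intervalIntegrable_Fu h b a) fun ξ hξ =>
    Fu_monotone h hξ.1

theorem abs_Wu_sub_Wu_le (hu : exp ‖u‖ ≤ M) (hv : exp ‖v‖ ≤ M) {x : ℝ} (hx : x ∈ Icc 0 xs) :
    |Wu xs h u x - Wu xs h v x| ≤ xs ^ 2 * M * ‖u - v‖ := by
  have hM : 0 ≤ M * ‖u - v‖ := mul_nonneg ((exp_pos _).le.trans hu) (norm_nonneg _)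
  have hint : |Wu xs h u x - Wu xs h v x| ≤ M * ‖u - v‖ * xs * x := by
    rw [Wu, Wu, ← integral_sub (intervalIntegrable_Fu h 0 x) (intervalIntegrable_Fu h 0 x)]
    have hbound := norm_integral_le_of_norm_le_const (a := 0) (b := x)
      (C := M * ‖u - v‖ * xs) fun ξ hξ => by
        rw [uIoc_of_le hx.1] at hξ
        exact (Real.norm_eq_abs _).trans_le <| (abs_Fu_sub_Fu_le h hu hv hξ.1.le).trans
          (mul_le_mul_of_nonneg_left (hξ.2.trans hx.2) hM)
    rwa [Real.norm_eq_abs, sub_zero, abs_of_nonneg hx.1] at hbound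
  calc _ ≤ M * ‖u - v‖ * xs * x := hint
    _ ≤ M * ‖u - v‖ * xs * xs := by gcongr; exact hx.2
    _ = xs ^ 2 * M * ‖u - v‖ := by ring

theorem front_sub_le (hu : exp ‖u‖ ≤ M) (hv : exp ‖v‖ ≤ M) {t₁ a b : ℝ} (ht₁ : 0 < t₁)
    (ha : a ∈ Icc 0 xs) (hb : b ∈ Icc 0 xs) (ht₁a : t₁ ≤ Wu xs h u a)
    (hWab : Wu xs h u a = Wu xs h v b) (hba : b ≤ a) :
    a - b ≤ xs ^ 5 * M ^ 4 / t₁ ^ 2 * ‖u - v‖ := by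
  have hM : 0 ≤ M := (exp_pos _).le.trans hu
  have hab : 0 ≤ a - b := sub_nonneg.2 hba
  have hFb : b ≤ M * Fu xs h u b := by
    have hF : 0 ≤ Fu xs h u b := by
      simpa only [Fu, integral_same] using Fu_monotone h hb.1
    exact (le_exp_norm_mul_Fu h hb.1).trans (mul_le_mul_of_nonneg_right hu hF)
  have hW : Wu xs h v b - Wu xs h u b ≤ xs ^ 2 * M * ‖u - v‖ := by
    rw [norm_sub_rev]
    exact le_of_abs_le (abs_Wu_sub_Wu_le h hv hu hb)
  have hgap : (a - b) * b ≤ xs ^ 2 * M ^ 2 * ‖u - v‖ :=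
    calc (a - b) * b ≤ (a - b) * (M * Fu xs h u b) := mul_le_mul_of_nonneg_left hFb hab
      _ = M * ((a - b) * Fu xs h u b) := by ring
      _ ≤ M * (Wu xs h v b - Wu xs h u b) :=
          mul_le_mul_of_nonneg_left (hWab ▸ sub_mul_Fu_le_Wu_sub_Wu h hba) hM
      _ ≤ M * (xs ^ 2 * M * ‖u - v‖) := mul_le_mul_of_nonneg_left hW hM
      _ = xs ^ 2 * M ^ 2 * ‖u - v‖ := by ring
  have hb_low : t₁ ≤ b * (xs * M) :=
    calc t₁ ≤ b ^ 2 * exp ‖v‖ := (ht₁a.trans_eq hWab).trans (Wu_le_sq_mul h hb.1)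
      _ ≤ b * (xs * M) := by
          rw [sq, mul_assoc]
          gcongr
          exacts [hb.1, hb.2]
  have ht₁_up : t₁ ≤ xs ^ 2 * M :=
    calc t₁ ≤ a ^ 2 * exp ‖u‖ := ht₁a.trans (Wu_le_sq_mul h ha.1)
      _ ≤ xs ^ 2 * M := by
          gcongr
          exacts [ha.1, ha.2]
  rw [div_mul_eq_mul_div, le_div_iff₀ (by positivity)]
  calc (a - b) * t₁ ^ 2 = (a - b) * t₁ * t₁ := by ring
    _ ≤ (a - b) * (b * (xs * M)) * (xs ^ 2 * M) := by
        gcongr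
        exact mul_nonneg hab (ht₁.le.trans hb_low)
    _ = (a - b) * b * (xs ^ 3 * M ^ 2) := by ring
    _ ≤ xs ^ 2 * M ^ 2 * ‖u - v‖ * (xs ^ 3 * M ^ 2) := by gcongr
    _ = xs ^ 5 * M ^ 4 * ‖u - v‖ := by ring

end Front

/-- Lemma 2, front estimate: for `t ∈ [t₁, min(τ*_u, τ*_v)]`,
`|Υ^u(t) - Υ^v(t)| ≤ C_{u,v}·‖u - v‖` where
`C_{u,v} = exp((x*)⁴·M⁶/t₁²)·(x*)⁵·M⁶/t₁²` and `M = exp(max(‖u‖,‖v‖))`. -/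
theorem stmt_11 (xs : ℝ) (hxs : 0 < xs) (t₁ : ℝ) (ht₁ : 0 < t₁)
    (u v : C(Icc (0:ℝ) xs, ℝ)) (Υu Υv : ℝ → ℝ)
    (hΥu : ∀ s ∈ Icc (0:ℝ) (tau xs hxs.le u), Υu s ∈ Icc 0 xs ∧ Wu xs hxs.le u (Υu s) = s)
    (hΥv : ∀ s ∈ Icc (0:ℝ) (tau xs hxs.le v), Υv s ∈ Icc 0 xs ∧ Wu xs hxs.le v (Υv s) = s)
    (t : ℝ) (ht : t ∈ Icc t₁ (min (tau xs hxs.le u) (tau xs hxs.le v))) :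
    |Υu t - Υv t| ≤
      Real.exp (xs ^ 4 * Real.exp (max ‖u‖ ‖v‖) ^ 6 / t₁ ^ 2) *
        (xs ^ 5 * Real.exp (max ‖u‖ ‖v‖) ^ 6 / t₁ ^ 2) * ‖u - v‖ := by
  obtain ⟨ht₁t, htτ⟩ := ht
  have ht0 : 0 ≤ t := ht₁.le.trans ht₁t
  obtain ⟨ha, hWa⟩ := hΥu t ⟨ht0, htτ.trans (min_le_left _ _)⟩
  obtain ⟨hb, hWb⟩ := hΥv t ⟨ht0, htτ.trans (min_le_right _ _)⟩
  set M := exp (max ‖u‖ ‖v‖)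
  have hu : exp ‖u‖ ≤ M := exp_le_exp.2 (le_max_left _ _)
  have hv : exp ‖v‖ ≤ M := exp_le_exp.2 (le_max_right _ _)
  have hM : 1 ≤ M := (one_le_exp (norm_nonneg u)).trans hu
  have hfront : |Υu t - Υv t| ≤ xs ^ 5 * M ^ 4 / t₁ ^ 2 * ‖u - v‖ := by
    rcases le_total (Υv t) (Υu t) with hba | hab
    · rw [abs_of_nonneg (sub_nonneg.2 hba)]
      exact front_sub_le hxs.le hu hv ht₁ ha hb (ht₁t.trans hWa.ge) (hWa.trans hWb.symm) hba
    · rw [abs_sub_comm, abs_of_nonneg (sub_nonneg.2 hab), norm_sub_rev]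
      exact front_sub_le hxs.le hv hu ht₁ hb ha (ht₁t.trans hWb.ge) (hWb.trans hWa.symm) hab
  calc |Υu t - Υv t| ≤ xs ^ 5 * M ^ 4 / t₁ ^ 2 * ‖u - v‖ := hfront
    _ ≤ xs ^ 5 * M ^ 6 / t₁ ^ 2 * ‖u - v‖ := by
        have hM46 : M ^ 4 ≤ M ^ 6 := pow_le_pow_right₀ hM (by norm_num)
        gcongr
    _ ≤ exp (xs ^ 4 * M ^ 6 / t₁ ^ 2) * (xs ^ 5 * M ^ 6 / t₁ ^ 2) * ‖u - v‖ := by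
        gcongr
        exact le_mul_of_one_le_left (by positivity) (one_le_exp (by positivity))
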